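/- Suppose a(t,x)=(a_ij(t,x)) is continuous, bounded, and symmetric positive definite for all (t,x)∈[0,T̃]×ℝ^d with T̃>T. Let 0≤r<T and let u ∈ C^{1,2}([r,T)×ℝ^d)∩C([r,T]×ℝ^d) satisfy ∂u/∂t + ℒu = 0 on [r,T)×ℝ^d. If there is a constant c≥0 with u(t,x) ≥ −c for all (t,x)∈[r,T]×ℝ^d and u(T,x) ≥ 0 for all x∈ℝ^d, then u(t,x) ≥ 0 for all (t,x)∈[r,T]×ℝ^d. -/

import Mathlib

open Finset Filter Topology Set

noncomputable section

/-- The successor `s'` of `s` in the partition `P` of `[0,T]` (equal to `T` if there is none). -/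
def succOf (T : ℝ) (P : Finset ℝ) (s : ℝ) : ℝ :=
  if h : (P.filter (fun u => s < u)).Nonempty then (P.filter (fun u => s < u)).min' h else T

/-- A refining sequence of partitions of `[0,T]` whose meshes tend to zero. -/
structure PartitionSeq (T : ℝ) where
  part : ℕ → Finset ℝ
  subset_Icc : ∀ n, ↑(part n) ⊆ Set.Icc (0 : ℝ) T
  zero_mem : ∀ n, (0 : ℝ) ∈ part n
  top_mem : ∀ n, T ∈ part n
  refining : ∀ n, part n ⊆ part (n + 1)
  mesh_to_zero : ∀ ε > 0, ∃ N, ∀ n ≥ N, ∀ s ∈ part n, succOf T (part n) s - s < ε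
/-- Approximating sums for the covariation `⟨S_i,S_j⟩(t)` along the `n`-th partition. -/
def covSum (T : ℝ) (𝕋 : PartitionSeq T) {d : ℕ} (S : ℝ → Fin d → ℝ) (i j : Fin d)
    (t : ℝ) (n : ℕ) : ℝ :=
  ∑ s ∈ (𝕋.part n).filter (fun s => s ≤ t),
    (S (succOf T (𝕋.part n) s) i - S s i) * (S (succOf T (𝕋.part n) s) j - S s j)

/-- The Föllmer integral `∫_r^t ξ(s)·dS(s)` exists along `(𝕋_n)` with value `I`. -/
def HasFollmerIntegral (T : ℝ) (𝕋 : PartitionSeq T) {d : ℕ} (ξ S : ℝ → Fin d → ℝ)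
    (r t I : ℝ) : Prop :=
  Tendsto (fun n => ∑ s ∈ (𝕋.part n).filter (fun s => r ≤ s ∧ s ≤ t),
    ∑ k, ξ s k * (S (succOf T (𝕋.part n) s) k - S s k)) atTop (𝓝 I)

/-- The open positive orthant `ℝ_+^d`. -/
def posOrth (d : ℕ) : Set (Fin d → ℝ) := {x | ∀ i, 0 < x i}

/-- The class `𝒮_a`: continuous trajectories whose covariations are `∫_0^t a_ij(s,S(s)) ds`. -/
def SclassA (T : ℝ) (𝕋 : PartitionSeq T) {d : ℕ}
    (a : ℝ → (Fin d → ℝ) → Fin d → Fin d → ℝ) : Set (ℝ → Fin d → ℝ) :=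
  {S | ContinuousOn S (Set.Icc 0 T) ∧
    ∀ i j : Fin d, ∀ t ∈ Set.Icc (0 : ℝ) T,
      Tendsto (fun n => covSum T 𝕋 S i j t n) atTop (𝓝 (∫ s in (0 : ℝ)..t, a s (S s) i j))}

/-- The class `𝒮_a^+`: positive continuous trajectories whose covariations are
`∫_0^t a_ij(s,S(s)) S_i(s) S_j(s) ds`. -/
def SclassAPos (T : ℝ) (𝕋 : PartitionSeq T) {d : ℕ}
    (a : ℝ → (Fin d → ℝ) → Fin d → Fin d → ℝ) : Set (ℝ → Fin d → ℝ) :=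
  {S | ContinuousOn S (Set.Icc 0 T) ∧ (∀ t ∈ Set.Icc (0 : ℝ) T, ∀ i, 0 < S t i) ∧
    ∀ i j : Fin d, ∀ t ∈ Set.Icc (0 : ℝ) T,
      Tendsto (fun n => covSum T 𝕋 S i j t n) atTop
        (𝓝 (∫ s in (0 : ℝ)..t, a s (S s) i j * S s i * S s j))}

/-- First partial derivative in the `i`-th space direction. -/
def pd1 {d : ℕ} (f : (Fin d → ℝ) → ℝ) (i : Fin d) (x : Fin d → ℝ) : ℝ :=
  fderiv ℝ f x (Pi.single i 1)

/-- Second partial derivative in the space directions `i, j`. -/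
def pd2 {d : ℕ} (f : (Fin d → ℝ) → ℝ) (i j : Fin d) (x : Fin d → ℝ) : ℝ :=
  fderiv ℝ (fun y => pd1 f j y) x (Pi.single i 1)

/-- Time derivative (within the time interval `I`). -/
def tderiv {d : ℕ} (I : Set ℝ) (v : ℝ → (Fin d → ℝ) → ℝ) (t : ℝ) (x : Fin d → ℝ) : ℝ :=
  derivWithin (fun τ => v τ x) I t

/-- `v` is of class `C^{1,2}(I × D)`: continuous on `I × D`, continuously differentiable in
`(t,x)` and twice continuously differentiable in `x` on `(int I) × D`, with all derivatives
admitting continuous extensions to `I × D`. -/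
structure IsC12 {d : ℕ} (I : Set ℝ) (D : Set (Fin d → ℝ)) (v : ℝ → (Fin d → ℝ) → ℝ) : Prop where
  cont : ContinuousOn (fun p : ℝ × (Fin d → ℝ) => v p.1 p.2) (I ×ˢ D)
  diff : ∀ t ∈ interior I, ∀ x ∈ D,
    DifferentiableAt ℝ (fun p : ℝ × (Fin d → ℝ) => v p.1 p.2) (t, x)
  diff2 : ∀ t ∈ interior I, ∀ x ∈ D, ∀ j : Fin d, DifferentiableAt ℝ (pd1 (v t) j) x
  derivs_extend : ∃ (gt : ℝ × (Fin d → ℝ) → ℝ) (gx : Fin d → ℝ × (Fin d → ℝ) → ℝ)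
      (gxx : Fin d → Fin d → ℝ × (Fin d → ℝ) → ℝ),
    ContinuousOn gt (I ×ˢ D) ∧ (∀ i, ContinuousOn (gx i) (I ×ˢ D)) ∧
    (∀ i j, ContinuousOn (gxx i j) (I ×ˢ D)) ∧
    ∀ t ∈ interior I, ∀ x ∈ D,
      gt (t, x) = deriv (fun τ => v τ x) t ∧
      (∀ i, gx i (t, x) = pd1 (v t) i x) ∧
      ∀ i j, gxx i j (t, x) = pd2 (v t) i j x

/-! Perturb `u` by the barrier `ε (1 + |x|²) e^{k (T - t)}`, where `k` exceeds the trace of `a`.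
The perturbed function `w` is coercive in `x`, so if it were negative somewhere on `[t, T] × ℝ^d` it
would attain a negative minimum at some `(t₀, x₀)`, with `t₀ < T` because `w(T, ·) > 0`. There
`∂ₜw ≥ 0`, and `tr (a D²w) ≥ 0` since `a = BᵀB` and, by the second derivative test along lines,
`vᵀ D²w v ≥ 0` for every `v`. But `∂ₜw + ½ tr (a D²w)` is `ε` times the same operator applied to
the barrier, which is negative by the choice of `k`. Hence `u + ε · barrier ≥ 0`; let `ε → 0`,
then `t ↓ r` by continuity. -/

open scoped Matrix

lemma HasDerivAt.nonneg_of_isMinOn_Icc {φ : ℝ → ℝ} {D a b : ℝ} (hφ : HasDerivAt φ D a)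
    (hab : a < b) (hmin : IsMinOn φ (Icc a b) a) : 0 ≤ D := by
  have hcone : b - a ∈ posTangentConeAt (Icc a b) a :=
    sub_mem_posTangentConeAt_of_segment_subset (segment_eq_Icc hab.le ▸ Subset.rfl)
  have h := hmin.localize.hasFDerivWithinAt_nonneg hφ.hasDerivWithinAt hcone
  simp only [ContinuousLinearMap.toSpanSingleton_apply, smul_eq_mul] at h
  exact nonneg_of_mul_nonneg_right h (sub_pos.2 hab)

lemma IsLocalMin.deriv_deriv_nonneg {φ : ℝ → ℝ} {a : ℝ} (hmin : IsLocalMin φ a)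
    (hφ : Differentiable ℝ φ) : 0 ≤ deriv (deriv φ) a := by
  by_contra! hneg
  have hright : ∀ᶠ x in 𝓝[>] a, deriv φ x < 0 :=
    deriv_neg_right_of_sign_deriv (nhdsWithin_le_nhds
      (eventually_nhdsWithin_sign_eq_of_deriv_neg hneg hmin.deriv_eq_zero))
  obtain ⟨b, hab, hb⟩ := mem_nhdsGT_iff_exists_Ioo_subset.1
    (hright.and (nhdsWithin_le_nhds (α := ℝ) (s := Ioi a) hmin))
  obtain ⟨x, hax, hxb⟩ := exists_between (mem_Ioi.1 hab)
  obtain ⟨c, hc, hslope⟩ := exists_deriv_eq_slope φ hax hφ.continuous.continuousOn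
    hφ.differentiableOn
  have hcneg : deriv φ c < 0 := (hb ⟨hc.1, hc.2.trans hxb⟩).1
  have hslope_nonneg : 0 ≤ (φ x - φ a) / (x - a) :=
    div_nonneg (sub_nonneg.2 (hb ⟨hax, hxb⟩).2) (sub_pos.2 hax).le
  linarith

lemma fderiv_apply_eq_sum_pd1 {d : ℕ} (f : (Fin d → ℝ) → ℝ) (x v : Fin d → ℝ) :
    fderiv ℝ f x v = ∑ j, v j * pd1 f j x := by
  conv_lhs => rw [← Finset.univ_sum_single v]
  simp only [map_sum, pd1]
  refine Finset.sum_congr rfl fun j _ => ?_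
  rw [← smul_eq_mul, ← map_smul, ← Pi.single_smul', smul_eq_mul, mul_one]

lemma pd2_eq_pd1_pd1 {d : ℕ} (f : (Fin d → ℝ) → ℝ) (i j : Fin d) (x : Fin d → ℝ) :
    pd2 f i j x = pd1 (pd1 f j) i x := rfl

lemma pd1_add {d : ℕ} {f g : (Fin d → ℝ) → ℝ} {x : Fin d → ℝ} (hf : DifferentiableAt ℝ f x)
    (hg : DifferentiableAt ℝ g x) (j : Fin d) : pd1 (f + g) j x = pd1 f j x + pd1 g j x := by
  rw [pd1, fderiv_add hf hg]
  rfl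

lemma Differentiable.pd1_add {d : ℕ} {f g : (Fin d → ℝ) → ℝ} (hf : Differentiable ℝ f)
    (hg : Differentiable ℝ g) (j : Fin d) : pd1 (f + g) j = pd1 f j + pd1 g j :=
  funext fun x => _root_.pd1_add (hf x) (hg x) j

lemma pd2_add {d : ℕ} {f g : (Fin d → ℝ) → ℝ} (hf : Differentiable ℝ f)
    (hg : Differentiable ℝ g) {i j : Fin d} {x : Fin d → ℝ}
    (hf' : DifferentiableAt ℝ (pd1 f j) x) (hg' : DifferentiableAt ℝ (pd1 g j) x) :
    pd2 (f + g) i j x = pd2 f i j x + pd2 g i j x := by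
  rw [pd2_eq_pd1_pd1, hf.pd1_add hg, pd1_add hf' hg']
  rfl

lemma IsLocalMin.sum_sum_mul_mul_pd2_nonneg {d : ℕ} {f : (Fin d → ℝ) → ℝ} {x₀ : Fin d → ℝ}
    (hmin : IsLocalMin f x₀) (hf : Differentiable ℝ f)
    (hf' : ∀ j, DifferentiableAt ℝ (pd1 f j) x₀) (v : Fin d → ℝ) :
    0 ≤ ∑ i, ∑ j, v i * v j * pd2 f i j x₀ := by
  have hline : ∀ s : ℝ, HasDerivAt (fun s : ℝ => x₀ + s • v) v s := fun s => by
    simpa using ((hasDerivAt_id s).smul_const v).const_add x₀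
  have hφ' : deriv (fun s : ℝ => f (x₀ + s • v)) = fun s => ∑ j, v j * pd1 f j (x₀ + s • v) :=
    funext fun s => by
      rw [← fderiv_apply_eq_sum_pd1]
      exact ((hf _).hasFDerivAt.comp_hasDerivAt s (hline s)).deriv
  have hφ'' : HasDerivAt (deriv fun s : ℝ => f (x₀ + s • v))
      (∑ j, v j * ∑ i, v i * pd2 f i j x₀) 0 := by
    rw [hφ']
    refine HasDerivAt.fun_sum fun j _ => HasDerivAt.const_mul _ ?_
    simp only [pd2_eq_pd1_pd1, ← fderiv_apply_eq_sum_pd1]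
    exact (hf' j).hasFDerivAt.comp_hasDerivAt_of_eq 0 (hline 0) (by simp)
  have hmin' : IsLocalMin (fun s : ℝ => f (x₀ + s • v)) 0 :=
    IsLocalMin.comp_continuous (g := fun s : ℝ => x₀ + s • v) (by simpa using hmin)
      (hline 0).continuousAt
  have hsum : ∑ j, v j * ∑ i, v i * pd2 f i j x₀ = ∑ i, ∑ j, v i * v j * pd2 f i j x₀ := by
    simp only [Finset.mul_sum]
    rw [Finset.sum_comm]
    exact Finset.sum_congr rfl fun i _ => Finset.sum_congr rfl fun j _ => by ring
  rw [← hsum, ← hφ''.deriv]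
  exact hmin'.deriv_deriv_nonneg fun s => (hf _).comp s (hline s).differentiableAt

lemma Matrix.posSemidef_of_sum_sum_mul_pos {n : Type*} [Fintype n] {A : Matrix n n ℝ}
    (hsymm : ∀ i j, A i j = A j i) (hpos : ∀ y : n → ℝ, y ≠ 0 → 0 < ∑ i, ∑ j, A i j * y i * y j) :
    A.PosSemidef := by
  refine Matrix.PosSemidef.of_dotProduct_mulVec_nonneg (Matrix.IsHermitian.ext fun i j => ?_) ?_
  · simp [hsymm i j]
  · intro y
    rcases eq_or_ne y 0 with rfl | hy
    · simp
    · have h := (hpos y hy).le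
      simp only [dotProduct, Matrix.mulVec, Pi.star_apply, star_trivial, Finset.mul_sum]
      convert h using 3 with i _ j _
      ring

lemma Matrix.PosSemidef.exists_eq_transpose_mul_self {n : Type*} [Fintype n] [DecidableEq n]
    {A : Matrix n n ℝ} (hA : A.PosSemidef) : ∃ B : Matrix n n ℝ, A = Bᵀ * B := by
  open scoped MatrixOrder in
  refine ⟨CFC.sqrt A, ?_⟩
  rw [← Matrix.conjTranspose_eq_transpose_of_trivial, ← Matrix.star_eq_conjTranspose,
    (CFC.sqrt_nonneg A).isSelfAdjoint.star_eq, CFC.sqrt_mul_sqrt_self A hA.nonneg]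

lemma IsLocalMin.sum_sum_mul_pd2_nonneg {d : ℕ} {f : (Fin d → ℝ) → ℝ} {x₀ : Fin d → ℝ}
    (hmin : IsLocalMin f x₀) (hf : Differentiable ℝ f)
    (hf' : ∀ j, DifferentiableAt ℝ (pd1 f j) x₀) {A : Matrix (Fin d) (Fin d) ℝ}
    (hA : A.PosSemidef) : 0 ≤ ∑ i, ∑ j, A i j * pd2 f i j x₀ := by
  obtain ⟨B, rfl⟩ := hA.exists_eq_transpose_mul_self
  calc 0 ≤ ∑ k, ∑ i, ∑ j, B k i * B k j * pd2 f i j x₀ :=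
        Finset.sum_nonneg fun k _ => hmin.sum_sum_mul_mul_pd2_nonneg hf hf' (B k)
    _ = ∑ i, ∑ j, (Bᵀ * B) i j * pd2 f i j x₀ := by
        simp only [Matrix.mul_apply, Matrix.transpose_apply, Finset.sum_mul]
        rw [Finset.sum_comm]
        exact Finset.sum_congr rfl fun i _ => Finset.sum_comm

theorem IsMinOn.hasDerivAt_add_sum_sum_mul_pd2_nonneg {d : ℕ} {v : ℝ → (Fin d → ℝ) → ℝ}
    {t₀ t₁ D : ℝ} {x₀ : Fin d → ℝ} (ht : t₀ < t₁)
    (hmin : IsMinOn (Function.uncurry v) (Icc t₀ t₁ ×ˢ univ) (t₀, x₀))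
    (hvt : HasDerivAt (fun t => v t x₀) D t₀) (hvx : Differentiable ℝ (v t₀))
    (hvxx : ∀ j, DifferentiableAt ℝ (pd1 (v t₀) j) x₀) {A : Matrix (Fin d) (Fin d) ℝ}
    (hA : A.PosSemidef) : 0 ≤ D + 1 / 2 * ∑ i, ∑ j, A i j * pd2 (v t₀) i j x₀ := by
  have htime : 0 ≤ D := hvt.nonneg_of_isMinOn_Icc ht fun t ht =>
    hmin (mk_mem_prod ht (mem_univ x₀))
  have hspace : IsLocalMin (v t₀) x₀ := Filter.Eventually.of_forall fun x =>
    hmin (mk_mem_prod (left_mem_Icc.2 ht.le) (mem_univ x))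
  have := hspace.sum_sum_mul_pd2_nonneg hvx hvxx hA
  positivity

namespace IsC12

variable {d : ℕ} {I : Set ℝ} {v : ℝ → (Fin d → ℝ) → ℝ} {t : ℝ}

lemma differentiable_apply (hv : IsC12 I univ v) (ht : t ∈ interior I) :
    Differentiable ℝ (v t) := fun x =>
  (hv.diff t ht x (mem_univ x)).comp x ((differentiableAt_const t).prodMk differentiableAt_id)

lemma hasDerivAt_tderiv {D : Set (Fin d → ℝ)} (hv : IsC12 I D v) (ht : t ∈ interior I)
    {J : Set ℝ} (hJ : J ∈ 𝓝 t) {x : Fin d → ℝ} (hx : x ∈ D) :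
    HasDerivAt (fun s => v s x) (tderiv J v t x) t := by
  have h := ((hv.diff t ht x hx).comp t
    ((differentiableAt_id).prodMk (differentiableAt_const x))).hasDerivAt
  rwa [tderiv, derivWithin_of_mem_nhds hJ]

end IsC12

lemma tendsto_sum_sq_cocompact_atTop {ι : Type*} [Fintype ι] :
    Tendsto (fun x : ι → ℝ => ∑ i, x i ^ 2) (cocompact _) atTop := by
  have hnorm : ∀ x : ι → ℝ, ‖x‖ ^ 2 ≤ ∑ i, x i ^ 2 := fun x => by
    have hle : ‖x‖ ≤ √(∑ i, x i ^ 2) := (pi_norm_le_iff_of_nonneg (Real.sqrt_nonneg _)).2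
      fun i => Real.abs_le_sqrt (Finset.single_le_sum (fun j _ => sq_nonneg (x j))
        (Finset.mem_univ i))
    calc ‖x‖ ^ 2 ≤ √(∑ i, x i ^ 2) ^ 2 := pow_le_pow_left₀ (norm_nonneg x) hle 2
      _ = ∑ i, x i ^ 2 := Real.sq_sqrt (Finset.sum_nonneg fun i _ => sq_nonneg (x i))
  exact tendsto_atTop_mono hnorm
    ((tendsto_pow_atTop two_ne_zero).comp tendsto_norm_cocompact_atTop)

lemma IsCompact.exists_isMinOn_prod_univ {X E : Type*} [TopologicalSpace X] [T2Space X]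
    [TopologicalSpace E] {S : Set X} (hS : IsCompact S) {g : X × E → ℝ}
    (hg : ContinuousOn g (S ×ˢ univ)) {h : E → ℝ} (hh : Tendsto h (cocompact E) atTop)
    (hgh : ∀ p ∈ S ×ˢ univ, h p.2 ≤ g p) {p₀ : X × E} (hp₀ : p₀ ∈ S ×ˢ univ) :
    ∃ p ∈ S ×ˢ univ, IsMinOn g (S ×ˢ univ) p := by
  refine hg.exists_isMinOn' (hS.isClosed.prod isClosed_univ) hp₀ ?_
  obtain ⟨K, hK, hKh⟩ := mem_cocompact.1 (hh.eventually_ge_atTop (g p₀))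
  refine Filter.mem_of_superset (inter_mem_inf
    (mem_cocompact.2 ⟨S ×ˢ K, hS.prod hK, Subset.rfl⟩) (mem_principal_self _)) ?_
  rintro p ⟨hpK, hpS⟩
  exact (hKh fun hp => hpK ⟨hpS.1, hp⟩).trans (hgh p hpS)

def barrier {d : ℕ} (ε k T t : ℝ) (x : Fin d → ℝ) : ℝ :=
  ε * (1 + ∑ i, x i ^ 2) * Real.exp (k * (T - t))

section Barrier

variable {d : ℕ} (ε k T : ℝ)

lemma continuous_uncurry_barrier : Continuous (Function.uncurry (barrier (d := d) ε k T)) := by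
  unfold Function.uncurry barrier
  fun_prop

lemma hasDerivAt_barrier_time (x : Fin d → ℝ) (t : ℝ) :
    HasDerivAt (fun t => barrier ε k T t x) (-k * barrier ε k T t x) t := by
  have h := (((hasDerivAt_id' t).const_sub T).const_mul k).exp.const_mul (ε * (1 + ∑ i, x i ^ 2))
  exact h.congr_deriv (by simp only [barrier]; ring)

lemma differentiable_barrier (t : ℝ) : Differentiable ℝ (barrier (d := d) ε k T t) := by
  unfold barrier
  fun_prop

lemma pd1_barrier (t : ℝ) (j : Fin d) :
    pd1 (barrier ε k T t) j = fun x => 2 * ε * Real.exp (k * (T - t)) * x j := by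
  funext x
  have hsq : HasFDerivAt (fun y : Fin d → ℝ => ∑ i, y i ^ 2) _ x :=
    HasFDerivAt.fun_sum fun i _ => (hasFDerivAt_apply (𝕜 := ℝ) i x).pow 2
  have h : HasFDerivAt (barrier ε k T t) _ x :=
    ((hsq.const_add 1).const_mul ε).mul_const (Real.exp (k * (T - t)))
  rw [pd1, h.fderiv]
  simp only [Nat.add_one_sub_one, pow_one, nsmul_eq_mul, Nat.cast_ofNat, smul_apply,
    _root_.sum_apply, ContinuousLinearMap.proj_apply, Pi.single_apply, smul_eq_mul, mul_ite,
    mul_one, mul_zero, sum_ite_eq', Finset.mem_univ, ↓reduceIte]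
  ring

lemma pd2_barrier (t : ℝ) (i j : Fin d) (x : Fin d → ℝ) :
    pd2 (barrier ε k T t) i j x = if i = j then 2 * ε * Real.exp (k * (T - t)) else 0 := by
  have h : HasFDerivAt (pd1 (barrier ε k T t) j)
      ((2 * ε * Real.exp (k * (T - t))) • ContinuousLinearMap.proj (R := ℝ) j) x := by
    rw [pd1_barrier]
    exact (hasFDerivAt_apply (𝕜 := ℝ) j x).const_mul _
  rw [pd2_eq_pd1_pd1, pd1, h.fderiv]
  simp [Pi.single_apply, eq_comm]

variable {ε k T}

lemma barrier_pos (hε : 0 < ε) (t : ℝ) (x : Fin d → ℝ) : 0 < barrier ε k T t x := by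
  unfold barrier
  positivity

lemma mul_sum_sq_le_barrier (hε : 0 ≤ ε) (hk : 0 ≤ k) {t : ℝ} (ht : t ≤ T) (x : Fin d → ℝ) :
    ε * ∑ i, x i ^ 2 ≤ barrier ε k T t x := by
  have hexp : 1 ≤ Real.exp (k * (T - t)) := Real.one_le_exp (mul_nonneg hk (sub_nonneg.2 ht))
  have hsq : 0 ≤ ∑ i, x i ^ 2 := Finset.sum_nonneg fun i _ => sq_nonneg (x i)
  calc ε * ∑ i, x i ^ 2 ≤ ε * (1 + ∑ i, x i ^ 2) * 1 := by nlinarith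
    _ ≤ barrier ε k T t x := mul_le_mul_of_nonneg_left hexp (by positivity)

lemma neg_mul_barrier_add_sum_pd2_barrier_neg (hε : 0 < ε) (hk : 0 ≤ k)
    {A : Matrix (Fin d) (Fin d) ℝ} (hA : ∑ i, A i i < k) (t : ℝ) (x : Fin d → ℝ) :
    -k * barrier ε k T t x + 1 / 2 * ∑ i, ∑ j, A i j * pd2 (barrier ε k T t) i j x < 0 := by
  have hsq : 0 ≤ ∑ i, x i ^ 2 := Finset.sum_nonneg fun i _ => sq_nonneg (x i)
  have hpos : 0 < ε * Real.exp (k * (T - t)) := by positivity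
  simp only [pd2_barrier, mul_ite, mul_zero, Finset.sum_ite_eq, Finset.mem_univ, if_true, barrier]
  rw [← Finset.sum_mul]
  nlinarith [mul_nonneg hk hsq]

lemma nonneg_of_forall_add_barrier_nonneg {y : ℝ} (t : ℝ) (x : Fin d → ℝ)
    (h : ∀ ε > 0, 0 ≤ y + barrier ε k T t x) : 0 ≤ y := by
  have hlim : Tendsto (fun ε => y + barrier ε k T t x) (𝓝[>] 0) (𝓝 y) := by
    have : Continuous fun ε => y + barrier ε k T t x := by
      unfold barrier
      fun_prop
    simpa [barrier] using (this.tendsto 0).mono_left nhdsWithin_le_nhds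
  exact ge_of_tendsto hlim (eventually_nhdsWithin_of_forall h)

end Barrier

lemma exists_isMinOn_add_barrier {d : ℕ} {t T k c ε : ℝ} {u : ℝ → (Fin d → ℝ) → ℝ}
    (hu_cont : ContinuousOn (Function.uncurry u) (Icc t T ×ˢ univ))
    (hu_lb : ∀ s ∈ Icc t T, ∀ x, -c ≤ u s x) (hk : 0 ≤ k) (hε : 0 < ε) (htT : t ≤ T) :
    ∃ p ∈ Icc t T ×ˢ univ,
      IsMinOn (Function.uncurry fun s => u s + barrier ε k T s) (Icc t T ×ˢ univ) p := by
  refine isCompact_Icc.exists_isMinOn_prod_univ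
    (hu_cont.add (continuous_uncurry_barrier ε k T).continuousOn)
    (h := fun y => -c + ε * ∑ i, y i ^ 2)
    (tendsto_atTop_add_const_left _ _ (tendsto_sum_sq_cocompact_atTop.const_mul_atTop hε))
    (fun p hp => ?_) (mk_mem_prod (left_mem_Icc.2 htT) (mem_univ (0 : Fin d → ℝ)))
  have := mul_sum_sq_le_barrier hε.le hk hp.1.2 p.2
  have := hu_lb p.1 hp.1 p.2
  simp only [Function.uncurry, Pi.add_apply]
  linarith

theorem add_barrier_nonneg_of_pde {d : ℕ} {a : ℝ → (Fin d → ℝ) → Fin d → Fin d → ℝ}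
    {r T k c ε : ℝ} {u : ℝ → (Fin d → ℝ) → ℝ}
    (ha_psd : ∀ t ∈ Ioo r T, ∀ x, (Matrix.of (a t x)).PosSemidef)
    (ha_tr : ∀ t ∈ Ioo r T, ∀ x, ∑ i, a t x i i < k) (hk : 0 ≤ k)
    (hu_cont : ContinuousOn (Function.uncurry u) (Icc r T ×ˢ univ))
    (hu_C12 : IsC12 (Ico r T) univ u)
    (hu_pde : ∀ t ∈ Ioo r T, ∀ x,
      tderiv (Icc r T) u t x + 1 / 2 * ∑ i, ∑ j, a t x i j * pd2 (u t) i j x = 0)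
    (hu_lb : ∀ t ∈ Icc r T, ∀ x, -c ≤ u t x) (hu_term : ∀ x, 0 ≤ u T x) (hε : 0 < ε)
    {t : ℝ} (ht : t ∈ Ioc r T) (x : Fin d → ℝ) : 0 ≤ u t x + barrier ε k T t x := by
  set w : ℝ → (Fin d → ℝ) → ℝ := fun s => u s + barrier ε k T s with hw
  have hslab : Icc t T ⊆ Icc r T := Icc_subset_Icc_left ht.1.le
  by_contra! hneg
  obtain ⟨⟨t₀, x₀⟩, ⟨ht₀, -⟩, hmin⟩ := exists_isMinOn_add_barrier
    (hu_cont.mono (prod_mono hslab Subset.rfl)) (fun s hs => hu_lb s (hslab hs)) hk hε ht.2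
  have hw₀ : w t₀ x₀ < 0 := (hmin (mk_mem_prod (left_mem_Icc.2 ht.2) (mem_univ x))).trans_lt hneg
  have ht₀T : t₀ < T := ht₀.2.lt_of_ne fun h => by
    subst h
    have := barrier_pos (k := k) (T := t₀) hε t₀ x₀
    have := hu_term x₀
    simp only [hw, Pi.add_apply] at hw₀
    linarith
  have ht₀I : t₀ ∈ Ioo r T := ⟨ht.1.trans_le ht₀.1, ht₀T⟩
  have ht₀int : t₀ ∈ interior (Ico r T) := by rwa [interior_Ico]
  have hu_x := hu_C12.differentiable_apply ht₀int
  have hb_x := differentiable_barrier (d := d) ε k T t₀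
  have hu_xx : ∀ j, DifferentiableAt ℝ (pd1 (u t₀) j) x₀ := fun j =>
    hu_C12.diff2 t₀ ht₀int x₀ (mem_univ x₀) j
  have hb_xx : ∀ j, DifferentiableAt ℝ (pd1 (barrier ε k T t₀) j) x₀ := fun j => by
    rw [pd1_barrier]
    fun_prop
  have key := (hmin.on_subset (prod_mono (Icc_subset_Icc_left ht₀.1) Subset.rfl))
    |>.hasDerivAt_add_sum_sum_mul_pd2_nonneg ht₀T
      ((hu_C12.hasDerivAt_tderiv ht₀int (Icc_mem_nhds ht₀I.1 ht₀T) (mem_univ x₀)).add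
        (hasDerivAt_barrier_time ε k T x₀ t₀))
      (hu_x.add hb_x) (fun j => by rw [hu_x.pd1_add hb_x]; exact (hu_xx j).add (hb_xx j))
      (ha_psd t₀ ht₀I x₀)
  simp only [pd2_add hu_x hb_x (hu_xx _) (hb_xx _), mul_add, Finset.sum_add_distrib,
    Matrix.of_apply] at key
  have hbarrier := neg_mul_barrier_add_sum_pd2_barrier_neg (T := T) hε hk
    (A := Matrix.of (a t₀ x₀)) (ha_tr t₀ ht₀I x₀) t₀ x₀
  simp only [Matrix.of_apply] at hbarrier
  linarith [hu_pde t₀ ht₀I x₀]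

lemma ContinuousOn.nonneg_of_forall_Ioc_nonneg {f : ℝ → ℝ} {a b : ℝ} (hab : a < b)
    (hf : ContinuousOn f (Icc a b)) (h : ∀ s ∈ Ioc a b, 0 ≤ f s) : ∀ s ∈ Icc a b, 0 ≤ f s := by
  intro s hs
  have hfs := hf s hs
  rw [← closure_Ioc hab.ne] at hs hfs
  exact ContinuousWithinAt.closure_le hs continuousWithinAt_const (hfs.mono subset_closure) h

theorem stmt16_general (T Ttil : ℝ) (hTt : T < Ttil) (d : ℕ)
    (a : ℝ → (Fin d → ℝ) → Fin d → Fin d → ℝ)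
    (ha_bdd : ∃ Cb : ℝ, ∀ t ∈ Set.Icc (0 : ℝ) Ttil, ∀ x : Fin d → ℝ, ∀ i j,
      |a t x i j| ≤ Cb)
    (ha_symm : ∀ t ∈ Set.Icc (0 : ℝ) Ttil, ∀ x : Fin d → ℝ, ∀ i j, a t x i j = a t x j i)
    (ha_pd : ∀ t ∈ Set.Icc (0 : ℝ) Ttil, ∀ x : Fin d → ℝ, ∀ y : Fin d → ℝ, y ≠ 0 →
      0 < ∑ i, ∑ j, a t x i j * y i * y j)
    (r : ℝ) (hr : 0 ≤ r) (hrT : r < T)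
    (u : ℝ → (Fin d → ℝ) → ℝ)
    (hu_cont : ContinuousOn (fun q : ℝ × (Fin d → ℝ) => u q.1 q.2)
      (Set.Icc r T ×ˢ (Set.univ : Set (Fin d → ℝ))))
    (hu_C12 : IsC12 (Set.Ico r T) (Set.univ : Set (Fin d → ℝ)) u)
    (hu_pde : ∀ t ∈ Set.Ico r T, ∀ x : Fin d → ℝ,
      tderiv (Set.Icc r T) u t x + (1 / 2) * ∑ i, ∑ j, a t x i j * pd2 (u t) i j x = 0)
    (c : ℝ)
    (hu_lb : ∀ t ∈ Set.Icc r T, ∀ x : Fin d → ℝ, -c ≤ u t x)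
    (hu_term : ∀ x : Fin d → ℝ, 0 ≤ u T x) :
    ∀ t ∈ Set.Icc r T, ∀ x : Fin d → ℝ, 0 ≤ u t x := by
  obtain ⟨Cb, hCb⟩ := ha_bdd
  have hmem : ∀ t ∈ Ioo r T, t ∈ Icc 0 Ttil := fun t ht =>
    ⟨hr.trans ht.1.le, ht.2.le.trans hTt.le⟩
  have ha_psd : ∀ t ∈ Ioo r T, ∀ x, (Matrix.of (a t x)).PosSemidef := fun t ht x =>
    Matrix.posSemidef_of_sum_sum_mul_pos (ha_symm t (hmem t ht) x) (ha_pd t (hmem t ht) x)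
  have ha_tr : ∀ t ∈ Ioo r T, ∀ x, ∑ i, a t x i i < d * |Cb| + 1 := fun t ht x => by
    have : ∑ i, a t x i i ≤ d * |Cb| := calc
      ∑ i, a t x i i ≤ ∑ _i : Fin d, |Cb| := Finset.sum_le_sum fun i _ =>
        (le_abs_self _).trans ((hCb t (hmem t ht) x i i).trans (le_abs_self Cb))
      _ = d * |Cb| := by simp
    linarith
  intro t ht x
  refine ContinuousOn.nonneg_of_forall_Ioc_nonneg hrT
    (hu_cont.comp (Continuous.continuousOn (by fun_prop)) fun s hs => mk_mem_prod hs (mem_univ x))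
    (fun s hs => nonneg_of_forall_add_barrier_nonneg s x fun ε hε =>
      add_barrier_nonneg_of_pde ha_psd ha_tr (by positivity) hu_cont hu_C12
        (fun t ht x => hu_pde t (Ioo_subset_Ico_self ht) x) hu_lb hu_term hε hs x) t ht

/-- The parabolic minimum principle used in the proof of Theorem 3.3: a solution of
`∂u/∂t + ℒu = 0` on `[r,T) × ℝ^d` that is bounded below and nonnegative at the terminal time
is nonnegative everywhere. -/
theorem stmt16 (T Ttil : ℝ) (hT : 0 < T) (hTt : T < Ttil) (d : ℕ)
    (a : ℝ → (Fin d → ℝ) → Fin d → Fin d → ℝ)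
    (ha_cont : ∀ i j, ContinuousOn (fun p : ℝ × (Fin d → ℝ) => a p.1 p.2 i j)
      (Set.Icc 0 Ttil ×ˢ (Set.univ : Set (Fin d → ℝ))))
    (ha_bdd : ∃ Cb : ℝ, ∀ t ∈ Set.Icc (0 : ℝ) Ttil, ∀ x : Fin d → ℝ, ∀ i j,
      |a t x i j| ≤ Cb)
    (ha_symm : ∀ t ∈ Set.Icc (0 : ℝ) Ttil, ∀ x : Fin d → ℝ, ∀ i j, a t x i j = a t x j i)
    (ha_pd : ∀ t ∈ Set.Icc (0 : ℝ) Ttil, ∀ x : Fin d → ℝ, ∀ y : Fin d → ℝ, y ≠ 0 →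
      0 < ∑ i, ∑ j, a t x i j * y i * y j)
    (r : ℝ) (hr : 0 ≤ r) (hrT : r < T)
    (u : ℝ → (Fin d → ℝ) → ℝ)
    (hu_cont : ContinuousOn (fun q : ℝ × (Fin d → ℝ) => u q.1 q.2)
      (Set.Icc r T ×ˢ (Set.univ : Set (Fin d → ℝ))))
    (hu_C12 : IsC12 (Set.Ico r T) (Set.univ : Set (Fin d → ℝ)) u)
    (hu_pde : ∀ t ∈ Set.Ico r T, ∀ x : Fin d → ℝ,
      tderiv (Set.Icc r T) u t x + (1 / 2) * ∑ i, ∑ j, a t x i j * pd2 (u t) i j x = 0)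
    (c : ℝ) (hc : 0 ≤ c)
    (hu_lb : ∀ t ∈ Set.Icc r T, ∀ x : Fin d → ℝ, -c ≤ u t x)
    (hu_term : ∀ x : Fin d → ℝ, 0 ≤ u T x) :
    ∀ t ∈ Set.Icc r T, ∀ x : Fin d → ℝ, 0 ≤ u t x :=
  stmt16_general T Ttil hTt d a ha_bdd ha_symm ha_pd r hr hrT u hu_cont hu_C12 hu_pde c hu_lb
    hu_term
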